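/- arXiv:1501.02366 — 5 statements merged into one kernel-verified Lean document; each statement's English description precedes it below -/
import Mathlib

section
/- Let t11 ≤ min(t12,t21) ≤ max(t12,t21) ≤ t22 be nonnegative reals, c(t) = h(t−t11) − h(t−t12) − h(t−t21) + h(t−t22), and define the cumulative contrast C(0,t) = ∫_0^t c(τ) dτ. Then C(0,t) ≥ 0 for all t ≥ 0 if and only if −t11 + t12 + t21 − t22 ≥ 0. -/
/-
The heaviside step is the right derivative of the ramp `x ↦ max x 0` everywhere (also at `0`),
so `∫₀ᵗ c = r(t - t11) - r(t - t12) - r(t - t21) + r(t - t22)` with `r = max · 0`.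
This piecewise linear function is `0` up to `t11`, has slope `≥ -1` after it and
is constant, equal to `-t11 + t12 + t21 - t22`, from `t22` on; so it is nonnegative
exactly when that final value is.
-/

noncomputable def heaviside (x : ℝ) : ℝ := if 0 ≤ x then 1 else 0

open Set intervalIntegral

lemma heaviside_mono : Monotone heaviside := by
  intro x y hxy
  unfold heaviside
  split_ifs with hx hy hy
  · rfl
  · exact absurd (hx.trans hxy) hy
  · exact zero_le_one
  · rfl

lemma hasDerivWithinAt_max_zero_Ioi (x : ℝ) :
    HasDerivWithinAt (fun y => max y 0) (heaviside x) (Ioi x) x := by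
  unfold heaviside
  split_ifs with hx
  · refine (hasDerivWithinAt_id x _).congr_of_eventuallyEq ?_ (max_eq_left hx)
    filter_upwards [self_mem_nhdsWithin] with y (hy : x < y)
    exact max_eq_left (hx.trans hy.le)
  · have hx : x < 0 := lt_of_not_ge hx
    refine (hasDerivWithinAt_const x _ (0 : ℝ)).congr_of_eventuallyEq ?_ (max_eq_right hx.le)
    filter_upwards [nhdsWithin_le_nhds (Iio_mem_nhds hx)] with y (hy : y < 0)
    exact max_eq_right hy.le

lemma integral_heaviside (a b : ℝ) : ∫ x in a..b, heaviside x = max b 0 - max a 0 :=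
  integral_eq_sub_of_hasDeriv_right (by fun_prop)
    (fun x _ => hasDerivWithinAt_max_zero_Ioi x) heaviside_mono.intervalIntegrable

lemma integral_heaviside_sub (a b s : ℝ) :
    ∫ x in a..b, heaviside (x - s) = max (b - s) 0 - max (a - s) 0 := by
  rw [integral_comp_sub_right, integral_heaviside]

lemma integral_zero_heaviside_sub {s : ℝ} (hs : 0 ≤ s) (t : ℝ) :
    ∫ x in (0:ℝ)..t, heaviside (x - s) = max (t - s) 0 := by
  rw [integral_heaviside_sub, zero_sub, max_eq_right (neg_nonpos.2 hs), sub_zero]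

lemma intervalIntegrable_heaviside_sub (s a b : ℝ) :
    IntervalIntegrable (fun x => heaviside (x - s)) MeasureTheory.volume a b :=
  (heaviside_mono.comp fun _ _ h => sub_le_sub_right h s).intervalIntegrable

section Ramps

variable {t11 t12 t21 t22 : ℝ}

lemma ramp_combination_at_last_threshold (h1 : t11 ≤ min t12 t21) (h2 : max t12 t21 ≤ t22) :
    max (t22 - t11) 0 - max (t22 - t12) 0 - max (t22 - t21) 0 + max (t22 - t22) 0
      = -t11 + t12 + t21 - t22 := by
  simp only [le_min_iff, max_le_iff] at h1 h2
  rw [max_eq_left (by linarith), max_eq_left (by linarith), max_eq_left (by linarith),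
    sub_self, max_self]
  ring

lemma ramp_combination_nonneg (h1 : t11 ≤ min t12 t21) (h2 : max t12 t21 ≤ t22)
    (hK : 0 ≤ -t11 + t12 + t21 - t22) (t : ℝ) :
    0 ≤ max (t - t11) 0 - max (t - t12) 0 - max (t - t21) 0 + max (t - t22) 0 := by
  simp only [le_min_iff, max_le_iff] at h1 h2
  simp only [max_def]
  split_ifs <;> linarith

end Ramps

theorem stmt3 (t11 t12 t21 t22 : ℝ)
    (h0 : 0 ≤ t11) (h1 : t11 ≤ min t12 t21) (h2 : max t12 t21 ≤ t22)
    (c : ℝ → ℝ)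
    (hc : ∀ t, c t = heaviside (t - t11) - heaviside (t - t12)
        - heaviside (t - t21) + heaviside (t - t22)) :
    (∀ t, 0 ≤ t → 0 ≤ ∫ τ in (0:ℝ)..t, c τ) ↔ 0 ≤ -t11 + t12 + t21 - t22 := by
  have h12 : 0 ≤ t12 := h0.trans (h1.trans (min_le_left _ _))
  have h21 : 0 ≤ t21 := h0.trans (h1.trans (min_le_right _ _))
  have h22 : 0 ≤ t22 := h12.trans ((le_max_left _ _).trans h2)
  have hC : ∀ t, ∫ τ in (0:ℝ)..t, c τ =
      max (t - t11) 0 - max (t - t12) 0 - max (t - t21) 0 + max (t - t22) 0 := by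
    intro t
    have hI := intervalIntegrable_heaviside_sub (a := 0) (b := t)
    simp only [hc]
    rw [integral_add (((hI t11).sub (hI t12)).sub (hI t21)) (hI t22),
      integral_sub ((hI t11).sub (hI t12)) (hI t21), integral_sub (hI t11) (hI t12),
      integral_zero_heaviside_sub h0, integral_zero_heaviside_sub h12,
      integral_zero_heaviside_sub h21, integral_zero_heaviside_sub h22]
  simp only [hC]
  refine ⟨fun h => ?_, fun hK t _ => ramp_combination_nonneg h1 h2 hK t⟩
  simpa only [ramp_combination_at_last_threshold h1 h2] using h t22 h22
end

section
/- Let t11 ≤ min(t12,t21) ≤ max(t12,t21) ≤ t22 be nonnegative reals and c(t) = h(t−t11) − h(t−t12) − h(t−t21) + h(t−t22). Then for every u > t22 and every t ≥ 0, the integral ∫_t^u c(τ) dτ ≤ 0 for all t if and only if −t11 + t12 + t21 − t22 ≤ 0. -/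
open Set

lemma monotone_heaviside_sub (a : ℝ) : Monotone fun x => heaviside (x - a) := by
  intro x y hxy
  simp only [heaviside]
  split_ifs <;> linarith

lemma hasDerivWithinAt_max_sub_zero_Ioi (a x : ℝ) :
    HasDerivWithinAt (fun y => max (y - a) 0) (heaviside (x - a)) (Ioi x) x := by
  unfold heaviside
  split_ifs with hx
  · refine ((hasDerivAt_id x).sub_const a).hasDerivWithinAt.congr (fun y hy => ?_) ?_
    · exact max_eq_left (by simp only [mem_Ioi] at hy; linarith)
    · exact max_eq_left hx
  · refine (hasDerivAt_const x (0 : ℝ)).hasDerivWithinAt.congr_of_eventuallyEq ?_ ?_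
    · filter_upwards [nhdsWithin_le_nhds (gt_mem_nhds (show x < a by linarith))] with y hy
      exact max_eq_right (by linarith)
    · exact max_eq_right (by linarith)

noncomputable def rampContrast (t11 t12 t21 t22 x : ℝ) : ℝ :=
  max (x - t11) 0 - max (x - t12) 0 - max (x - t21) 0 + max (x - t22) 0

lemma integral_heaviside_contrast (t11 t12 t21 t22 t u : ℝ) :
    ∫ τ in t..u, (heaviside (τ - t11) - heaviside (τ - t12) - heaviside (τ - t21)
        + heaviside (τ - t22)) =
      rampContrast t11 t12 t21 t22 u - rampContrast t11 t12 t21 t22 t := by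
  have hint (a : ℝ) : IntervalIntegrable (fun τ => heaviside (τ - a)) MeasureTheory.volume t u :=
    (monotone_heaviside_sub a).intervalIntegrable
  refine intervalIntegral.integral_eq_sub_of_hasDeriv_right (by unfold rampContrast; fun_prop)
    (fun x _ => ?_) (((hint t11).sub (hint t12)).sub (hint t21) |>.add (hint t22))
  exact (((hasDerivWithinAt_max_sub_zero_Ioi t11 x).sub
    (hasDerivWithinAt_max_sub_zero_Ioi t12 x)).sub
    (hasDerivWithinAt_max_sub_zero_Ioi t21 x)).add (hasDerivWithinAt_max_sub_zero_Ioi t22 x)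

lemma rampContrast_of_le {t11 t12 t21 t22 x : ℝ} (h11 : x ≤ t11) (h12 : x ≤ t12)
    (h21 : x ≤ t21) (h22 : x ≤ t22) : rampContrast t11 t12 t21 t22 x = 0 := by
  simp [rampContrast, h11, h12, h21, h22]

lemma rampContrast_of_ge {t11 t12 t21 t22 x : ℝ} (h11 : t11 ≤ x) (h12 : t12 ≤ x)
    (h21 : t21 ≤ x) (h22 : t22 ≤ x) :
    rampContrast t11 t12 t21 t22 x = -t11 + t12 + t21 - t22 := by
  simp only [rampContrast, sub_nonneg, h11, h12, h21, h22, max_eq_left]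
  ring

lemma min_zero_le_rampContrast {t11 t12 t21 t22 : ℝ} (h1 : t11 ≤ min t12 t21)
    (h2 : max t12 t21 ≤ t22) (x : ℝ) :
    min 0 (-t11 + t12 + t21 - t22) ≤ rampContrast t11 t12 t21 t22 x := by
  simp only [le_min_iff, max_le_iff] at h1 h2
  unfold rampContrast
  rcases max_cases (x - t11) 0 with ⟨e11, _⟩ | ⟨e11, _⟩ <;>
    rcases max_cases (x - t12) 0 with ⟨e12, _⟩ | ⟨e12, _⟩ <;>
    rcases max_cases (x - t21) 0 with ⟨e21, _⟩ | ⟨e21, _⟩ <;>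
    rcases max_cases (x - t22) 0 with ⟨e22, _⟩ | ⟨e22, _⟩ <;>
    rw [e11, e12, e21, e22] <;>
    first | exact min_le_of_left_le (by linarith) | exact min_le_of_right_le (by linarith)

theorem stmt4 (t11 t12 t21 t22 : ℝ)
    (h0 : 0 ≤ t11) (h1 : t11 ≤ min t12 t21) (h2 : max t12 t21 ≤ t22)
    (c : ℝ → ℝ)
    (hc : ∀ t, c t = heaviside (t - t11) - heaviside (t - t12)
        - heaviside (t - t21) + heaviside (t - t22)) :
    (∀ u, t22 < u → ∀ t, 0 ≤ t → (∫ τ in t..u, c τ) ≤ 0) ↔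
      -t11 + t12 + t21 - t22 ≤ 0 := by
  simp only [le_min_iff, max_le_iff] at h1 h2
  obtain ⟨h11_12, h11_21⟩ := h1
  obtain ⟨h12_22, h21_22⟩ := h2
  have hΦ0 : rampContrast t11 t12 t21 t22 0 = 0 :=
    rampContrast_of_le h0 (h0.trans h11_12) (h0.trans h11_21) (h0.trans (h11_12.trans h12_22))
  have hΦu {u : ℝ} (hu : t22 < u) : rampContrast t11 t12 t21 t22 u = -t11 + t12 + t21 - t22 :=
    rampContrast_of_ge (by linarith) (by linarith) (by linarith) hu.le
  simp only [hc, integral_heaviside_contrast]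
  constructor
  · intro H
    simpa [hΦu (lt_add_one t22), hΦ0] using H (t22 + 1) (lt_add_one t22) 0 le_rfl
  · intro hS u hu t _
    have hΦt := min_zero_le_rampContrast (le_min h11_12 h11_21) (max_le h12_22 h21_22) t
    rw [min_eq_right hS] at hΦt
    linarith [hΦu hu]
end

section
/- Let a1 ≤ a2 and b1 ≤ b2 be real numbers, and define tij = max(ai, bj) for i,j ∈ {1,2}. Then c(t) = h(t−t11) − h(t−t12) − h(t−t21) + h(t−t22) ≥ 0 for all real t, where h is the Heaviside function. -/
theorem stmt7 (a1 a2 b1 b2 : ℝ) (ha : a1 ≤ a2) (hb : b1 ≤ b2) :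
    ∀ t : ℝ,
      0 ≤ heaviside (t - max a1 b1) - heaviside (t - max a1 b2)
        - heaviside (t - max a2 b1) + heaviside (t - max a2 b2) := by
  intro t
  unfold heaviside
  have h1 : max a1 b1 ≤ max a1 b2 := max_le_max le_rfl hb
  have h2 : max a1 b1 ≤ max a2 b1 := max_le_max ha le_rfl
  have h3 : max a1 b2 ≤ max a2 b2 := max_le_max ha le_rfl
  have h4 : max a2 b1 ≤ max a2 b2 := max_le_max le_rfl hb
  have h6 : max a2 b2 ≤ max a1 b2 ∨ max a2 b2 ≤ max a2 b1 := by
    rcases le_total a2 b2 with h | h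
    · left; rw [max_eq_right h]; exact le_max_right _ _
    · right; rw [max_eq_left h]; exact le_max_left _ _
  split_ifs <;> rcases h6 with h6 | h6 <;> norm_num <;> linarith
end

section
/- Let t'11 ≤ min(t'12,t'21), max(t'12,t'21) ≤ t'22 be reals with −t'11 + t'12 + t'21 − t'22 = 0, and let x be any real. Define tij = max(t'ij, x). Then −t11 + t12 + t21 − t22 ≤ 0. -/
theorem stmt12 (t11 t12 t21 t22 x : ℝ)
    (h1 : t11 ≤ min t12 t21) (h2 : max t12 t21 ≤ t22)
    (hsum : -t11 + t12 + t21 - t22 = 0) :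
    -(max t11 x) + (max t12 x) + (max t21 x) - (max t22 x) ≤ 0 := by
  have h3 := le_min_iff.mp h1
  have h4 := max_le_iff.mp h2
  simp only [max_def]
  split_ifs <;> linarith [h3.1, h3.2, h4.1, h4.2]
end

section
/- For n ≥ 1, let x^k_1 ≤ x^k_2 be nonnegative reals for k = 1,…,n, and define t_{i1…in} = Σ_k x^k_{ik} for (i1,…,in) ∈ {1,2}^n. Let c^(n)(t) = Σ (−1)^{n+Σik} h(t − t_{i1…in}), and define c^[n](0,t) by iterated integration: c^[1](0,t) = c^(1)(t), and c^[n](0,t) = ∫_{t−x^w_2}^{t−x^w_1} c^[n−1](0,τ)dτ for any fixed coordinate w. Then c^[n](0,t) ≥ 0 for all t ≥ 0. -/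
/-- The `n`-th cumulative interaction contrast `c^[n+1](0,t)` for the serial
architecture with component values `x k 0 ≤ x k 1`, defined by the recursion
`c^[n](0,t) = ∫_{t−x^n_2}^{t−x^n_1} c^[n−1](0,τ) dτ`. -/
noncomputable def ccum (x : ℕ → Fin 2 → ℝ) : ℕ → ℝ → ℝ
  | 0, t => heaviside (t - x 0 0) - heaviside (t - x 0 1)
  | (n + 1), t => ∫ τ in (t - x (n + 1) 1)..(t - x (n + 1) 0), ccum x n τ

theorem stmt15 (n : ℕ) (x : ℕ → Fin 2 → ℝ)
    (hx0 : ∀ k, 0 ≤ x k 0) (hx : ∀ k, x k 0 ≤ x k 1) :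
    ∀ t, 0 ≤ t → 0 ≤ ccum x n t := by
  have key : ∀ m t, 0 ≤ ccum x m t := by
    intro m
    induction m with
    | zero =>
      intro t
      simp only [ccum, heaviside, sub_nonneg]
      by_cases h1 : x 0 0 ≤ t
      · have h2 : x 0 1 ≤ t ∨ ¬ x 0 1 ≤ t := em _
        rcases h2 with h2 | h2 <;> simp [h1, h2]
      · have h2 : ¬ x 0 1 ≤ t := fun h => h1 (le_trans (hx 0) h)
        simp [h1, h2]
    | succ m ih =>
      intro t
      simp only [ccum]
      exact intervalIntegral.integral_nonneg
        (by linarith [hx (m + 1)]) (fun u _ => ih u)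
  exact fun t _ => key n t
end
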